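/- arXiv:1609.05191 — 4 statements merged into one kernel-verified Lean document; each statement's English description precedes it below -/
import Mathlib

section
/- Let p_a(z) = z^n + a_1 z^{n−1} + ⋯ + a_n be a monic polynomial of degree n with real coefficients. Suppose for every complex z with |z| = α (where 0 < α ≤ 1), the value p_a(z)/z^n lies in the set C = {w ∈ ℂ : Re(w) ≥ (1+τ₀)|Im(w)|} ∩ {w : τ₁ < Re(w) < τ₂} for some positive constants τ₀, τ₁, τ₂. Then every root of p_a has absolute value strictly less than α. -/
/-!
Let `q` be the reversal of `p` at degree `n`, so that `q (w⁻¹) = p w / wⁿ`. On the circle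
`‖w‖ = α⁻¹` the real part of `q` exceeds `τ₁ > 0`, so by the minimum principle for the real
part of a holomorphic function it stays `≥ τ₁` on the whole disc `‖w‖ ≤ α⁻¹`. A root `z` of `p`
with `‖z‖ ≥ α` would give a zero `z⁻¹` of `q` in that disc.
-/

open Metric Bornology

theorem Polynomial.eval_reflect_inv {K : Type*} [Field K] {p : Polynomial K} {n : ℕ}
    (hp : p.natDegree ≤ n) {x : K} (hx : x ≠ 0) :
    (p.reflect n).eval x⁻¹ = p.eval x / x ^ n := by
  let : Invertible x := invertibleOfNonzero hx
  rw [eq_div_iff (pow_ne_zero n hx), ← invOf_eq_inv, ← Polynomial.eval₂_id,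
    Polynomial.eval₂_reflect_mul_pow _ _ _ _ hp, Polynomial.eval₂_id]

theorem Complex.le_re_of_forall_mem_frontier_le_re {E : Type*} [NormedAddCommGroup E]
    [NormedSpace ℂ E] [Nontrivial E] {f : E → ℂ} {U : Set E} (hU : IsBounded U)
    (hd : DiffContOnCl ℂ f U)
    {C : ℝ} (hC : ∀ z ∈ frontier U, C ≤ (f z).re) {z : E} (hz : z ∈ closure U) :
    C ≤ (f z).re := by
  -- maximum modulus principle for `exp ∘ (-f)`, whose modulus is `exp (-re f)`
  have hexp : DiffContOnCl ℂ (fun w => Complex.exp (-f w)) U :=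
    ⟨hd.1.neg.cexp, hd.2.neg.cexp⟩
  have key := Complex.norm_le_of_forall_mem_frontier_norm_le hU hexp (C := Real.exp (-C))
    (fun w hw => by
      rw [Complex.norm_exp, Complex.neg_re, Real.exp_le_exp, neg_le_neg_iff]
      exact hC w hw) hz
  rwa [Complex.norm_exp, Complex.neg_re, Real.exp_le_exp, neg_le_neg_iff] at key

theorem Polynomial.norm_lt_of_eval_eq_zero_of_le_re_eval_div_pow {p : Polynomial ℂ} {n : ℕ}
    (hp : p.natDegree ≤ n) {α τ : ℝ} (hα : 0 < α) (hτ : 0 < τ)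
    (h : ∀ z : ℂ, ‖z‖ = α → τ ≤ (p.eval z / z ^ n).re) {z : ℂ} (hz : p.eval z = 0) :
    ‖z‖ < α := by
  by_contra! hαz
  have hz0 : z ≠ 0 := norm_pos_iff.mp (hα.trans_le hαz)
  have hsphere :
      ∀ w ∈ frontier (closedBall (0 : ℂ) α⁻¹), τ ≤ ((p.reflect n).eval w).re := by
    intro w hw
    rw [frontier_closedBall _ (inv_ne_zero hα.ne'), mem_sphere_zero_iff_norm] at hw
    have hw0 : w ≠ 0 := norm_pos_iff.mp (hw ▸ inv_pos.mpr hα)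
    rw [← inv_inv w, eval_reflect_inv hp (inv_ne_zero hw0)]
    exact h _ (by rw [norm_inv, hw, inv_inv])
  have hmem : z⁻¹ ∈ closure (closedBall (0 : ℂ) α⁻¹) := by
    rw [closure_closedBall, mem_closedBall_zero_iff, norm_inv]
    exact inv_anti₀ hα hαz
  have hmin := Complex.le_re_of_forall_mem_frontier_le_re isBounded_closedBall
    (p.reflect n).differentiable.diffContOnCl hsphere hmem
  rw [eval_reflect_inv hp hz0, hz, zero_div, Complex.zero_re] at hmin
  exact hmin.not_gt hτ

theorem stmt2_general (n : ℕ) (p : Polynomial ℂ)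
    (hdeg : p.natDegree = n)
    (α τ₀ τ₁ τ₂ : ℝ) (hα : 0 < α)
    (h1 : 0 < τ₁)
    (hC : ∀ z : ℂ, ‖z‖ = α →
      (1 + τ₀) * |(p.eval z / z ^ n).im| ≤ (p.eval z / z ^ n).re ∧
      τ₁ < (p.eval z / z ^ n).re ∧ (p.eval z / z ^ n).re < τ₂) :
    ∀ z : ℂ, p.eval z = 0 → ‖z‖ < α :=
  fun _ hz => Polynomial.norm_lt_of_eval_eq_zero_of_le_re_eval_div_pow hdeg.le hα h1
    (fun w hw => (hC w hw).2.1.le) hz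

/-- If p is a monic real-coefficient polynomial of degree n such that p(z)/zⁿ lies in the
region C = {w : Re w ≥ (1+τ₀)|Im w|, τ₁ < Re w < τ₂} for all |z| = α, then all roots of p
have absolute value strictly less than α. -/
theorem stmt2 (n : ℕ) (hn : 0 < n) (p : Polynomial ℂ)
    (hmonic : p.Monic) (hdeg : p.natDegree = n)
    (hreal : ∀ k, (p.coeff k).im = 0)
    (α τ₀ τ₁ τ₂ : ℝ) (hα : 0 < α) (hα1 : α ≤ 1)
    (h0 : 0 < τ₀) (h1 : 0 < τ₁) (h2 : 0 < τ₂)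
    (hC : ∀ z : ℂ, ‖z‖ = α →
      (1 + τ₀) * |(p.eval z / z ^ n).im| ≤ (p.eval z / z ^ n).re ∧
      τ₁ < (p.eval z / z ^ n).re ∧ (p.eval z / z ^ n).re < τ₂) :
    ∀ z : ℂ, p.eval z = 0 → ‖z‖ < α :=
  stmt2_general n p hdeg α τ₀ τ₁ τ₂ hα h1 hC
end

section
/- Fix z ∈ ℂ and complex numbers s, p, ŝ, p̂ with p ≠ 0, p̂ ≠ 0. Define h = |ŝ/p̂ − s/p|². Then the directional derivative identity holds: (∂h/∂p̂)·(p̂ − p) + (∂h/∂ŝ)·(ŝ − s) = 2 Re(p/p̂) · |ŝ/p̂ − s/p|², where ∂h/∂ŝ = 2Re{(1/p̂)(ŝ/p̂ − s/p)*} and ∂h/∂p̂ = −2Re{(ŝ/p̂²)(ŝ/p̂ − s/p)*} are the Wirtinger-type real gradients with respect to the complex parameters ŝ and p̂. -/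
/-!
Write `D = ŝ/p̂ − s/p`. Along the direction `(p̂ − p, ŝ − s)` the complex first-order variation of
`ŝ/p̂ − s/p` is `−(ŝ/p̂²)(p̂ − p) + (ŝ − s)/p̂ = (p/p̂)·D`, so pairing it with `D*` and taking twice the
real part gives `2 Re(p/p̂)·|D|²`.
-/

open ComplexConjugate

theorem neg_div_sq_mul_sub_add_sub_div {K : Type*} [Field K] {s p sh ph : K} (hp : p ≠ 0)
    (hph : ph ≠ 0) : -(sh / ph ^ 2 * (ph - p)) + (sh - s) / ph = p / ph * (sh / ph - s / p) := by
  field_simp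
  ring

theorem Complex.re_mul_mul_conj (w z : ℂ) : (w * z * conj z).re = w.re * ‖z‖ ^ 2 := by
  rw [mul_assoc, mul_conj', ← ofReal_pow, re_mul_ofReal]

open Complex in
/-- The core algebraic identity for weak quasi-convexity of the idealized risk:
with D = ŝ/p̂ − s/p,
  −2 Re{(ŝ/p̂²)·D*·(p̂ − p)} + 2 Re{(1/p̂)·D*·(ŝ − s)} = 2 Re(p/p̂)·|D|². -/
theorem stmt8 (s p sh ph : ℂ) (hp : p ≠ 0) (hph : ph ≠ 0) :
    -(2 * ((sh / ph ^ 2) * (starRingEnd ℂ) (sh / ph - s / p) * (ph - p)).re)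
      + 2 * ((1 / ph) * (starRingEnd ℂ) (sh / ph - s / p) * (sh - s)).re
      = 2 * (p / ph).re * ‖sh / ph - s / p‖ ^ 2 := by
  calc _ = 2 * (-(sh / ph ^ 2 * conj (sh / ph - s / p) * (ph - p))
          + 1 / ph * conj (sh / ph - s / p) * (sh - s)).re := by
        rw [add_re, neg_re]
        ring
    _ = 2 * ((-(sh / ph ^ 2 * (ph - p)) + (sh - s) / ph) * conj (sh / ph - s / p)).re := by
        congr 2
        ring
    _ = 2 * (p / ph * (sh / ph - s / p) * conj (sh / ph - s / p)).re := by
        rw [neg_div_sq_mul_sub_add_sub_div hp hph]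
    _ = _ := by
        rw [re_mul_mul_conj, mul_assoc]
end

section
/- Let p(z) be a monic polynomial of degree n with distinct roots λ_1, ..., λ_n, all of absolute value at most α < 1, and let Γ = Σ_j |λ_j^n / ∏_{i≠j}(λ_i − λ_j)|. Then for every ζ > 0 there exists d = O(max{(1/(1−α)) · log(Γ/((1−α)ζ)), 0}) and a monic polynomial h(z) of degree d such that for all z with |z| = 1: |z^{n+d}/p(z) − h(z)| ≤ ζ. -/
/-!
Write `p = ∏ⱼ (X - λⱼ)` and take `h = X^(n+d) /ₘ p`. The error `z^(n+d)/p(z) - h(z)` is then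
`r(z)/p(z)` for the remainder `r = X^(n+d) %ₘ p`, which interpolates `λⱼ^(n+d)` at the roots;
the barycentric form of Lagrange interpolation expands it into partial fractions
`Σⱼ λⱼ^(n+d) / (∏_{i≠j} (λⱼ - λᵢ) (z - λⱼ))`. On the unit circle `|z - λⱼ| ≥ 1 - α`, so the
error is at most `αᵈ Γ / (1 - α)`, and `αᵈ ≤ exp(-(1 - α) d)` makes this `≤ ζ` as soon as
`d ≥ log(Γ / ((1 - α) ζ)) / (1 - α)`.
-/

open Polynomial Finset

theorem Polynomial.Monic.divByMonic_of_degree_le {R : Type*} [CommRing R] {p q : R[X]}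
    (hp : p.Monic) (hq : q.Monic) (h : q.degree ≤ p.degree) : (p /ₘ q).Monic := by
  rw [Monic, leadingCoeff_divByMonic_of_monic hq h, hp.leadingCoeff]

namespace Lagrange

theorem eval_div_eval_nodal_sub_eval_divByMonic {F ι : Type*} [Field F] [DecidableEq ι]
    {s : Finset ι} {v : ι → F} (hvs : Set.InjOn v s) (f : F[X]) {x : F}
    (hx : ∀ i ∈ s, x ≠ v i) :
    f.eval x / (nodal s v).eval x - (f /ₘ nodal s v).eval x =
      ∑ i ∈ s, nodalWeight s v i * (x - v i)⁻¹ * f.eval (v i) := by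
  have hpx : (nodal s v).eval x ≠ 0 := eval_nodal_not_at_node hx
  have hrem : f %ₘ nodal s v = interpolate s v fun i => f.eval (v i) := by
    refine eq_interpolate_of_eval_eq _ hvs ?_ fun i hi => ?_
    · rw [← degree_nodal (v := v)]
      exact degree_modByMonic_lt _ nodal_monic
    · have := congrArg (eval (v i)) (modByMonic_add_div f (nodal s v))
      rwa [eval_add, eval_mul, eval_nodal_at_node hi, zero_mul, add_zero] at this
  have hfx : f.eval x = (f %ₘ nodal s v).eval x + (nodal s v).eval x * (f /ₘ nodal s v).eval x := by
    rw [← eval_mul, ← eval_add, modByMonic_add_div]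
  rw [hfx, add_div, mul_div_cancel_left₀ _ hpx, add_sub_cancel_right, hrem,
    eval_interpolate_not_at_node _ hx, mul_div_cancel_left₀ _ hpx]

theorem norm_nodalWeight {𝕜 ι : Type*} [NormedField 𝕜] [DecidableEq ι] (s : Finset ι)
    (v : ι → 𝕜) (i : ι) :
    ‖nodalWeight s v i‖ = ‖(∏ j ∈ s.erase i, (v j - v i))⁻¹‖ := by
  simp only [nodalWeight, norm_inv, norm_prod, norm_sub_rev, prod_inv_distrib]

end Lagrange

theorem sub_le_norm_sub_of_norm_eq_one {𝕜 : Type*} [NormedField 𝕜] {α : ℝ} {z μ : 𝕜}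
    (hz : ‖z‖ = 1) (hμ : ‖μ‖ ≤ α) : 1 - α ≤ ‖z - μ‖ := by
  linarith [norm_sub_norm_le z μ]

theorem pow_le_exp_neg_mul {α : ℝ} (hα : 0 ≤ α) (d : ℕ) :
    α ^ d ≤ Real.exp (-((1 - α) * d)) := by
  calc α ^ d ≤ Real.exp (α - 1) ^ d :=
        pow_le_pow_left₀ hα (by linarith [Real.add_one_le_exp (α - 1)]) d
    _ = Real.exp (-((1 - α) * d)) := by rw [← Real.exp_nat_mul]; ring_nf

theorem pow_mul_le_of_log_div_le {α Γ ε : ℝ} {d : ℕ} (hα0 : 0 ≤ α) (hα1 : α < 1)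
    (hε : 0 < ε) (hd : 1 / (1 - α) * Real.log (Γ / ε) ≤ d) : α ^ d * Γ ≤ ε := by
  rcases le_or_gt Γ 0 with hΓ | hΓ
  · nlinarith [pow_nonneg hα0 d]
  have hlog : Real.log (Γ / ε) ≤ (1 - α) * d := by
    rwa [one_div, inv_mul_le_iff₀ (sub_pos.2 hα1)] at hd
  calc α ^ d * Γ ≤ Real.exp (-Real.log (Γ / ε)) * Γ := by
        gcongr
        exact (pow_le_exp_neg_mul hα0 d).trans (Real.exp_le_exp.2 (by linarith))
    _ = ε := by
        rw [Real.exp_neg, Real.exp_log (div_pos hΓ hε), inv_div, div_mul_cancel₀ _ hΓ.ne']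

theorem norm_nodalWeight_mul_inv_sub_mul_pow_le {𝕜 ι : Type*} [NormedField 𝕜] [DecidableEq ι]
    (s : Finset ι) (v : ι → 𝕜) {i : ι} {α : ℝ} {z : 𝕜} (hα : α < 1) (hz : ‖z‖ = 1)
    (hv : ‖v i‖ ≤ α) (n d : ℕ) :
    ‖Lagrange.nodalWeight s v i * (z - v i)⁻¹ * v i ^ (n + d)‖ ≤
      α ^ d / (1 - α) * ‖v i ^ n / ∏ j ∈ s.erase i, (v j - v i)‖ := by
  have hsep := sub_le_norm_sub_of_norm_eq_one hz hv
  have h1α : 0 < 1 - α := sub_pos.2 hα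
  have hα0 : 0 ≤ α := (norm_nonneg _).trans hv
  rw [div_eq_mul_inv (v i ^ n), norm_mul (v i ^ n), ← Lagrange.norm_nodalWeight, norm_mul, norm_mul,
    norm_inv, norm_pow, norm_pow, pow_add]
  calc _ = ‖Lagrange.nodalWeight s v i‖ * ‖v i‖ ^ n * (‖v i‖ ^ d / ‖z - v i‖) := by ring
    _ ≤ ‖Lagrange.nodalWeight s v i‖ * ‖v i‖ ^ n * (α ^ d / (1 - α)) := by gcongr
    _ = _ := by ring

/-- Approximation of the inverse of a polynomial: for p monic of degree n with distinct
roots of modulus ≤ α < 1 and conditioning Γ = Σⱼ |λⱼⁿ/∏_{i≠j}(λᵢ−λⱼ)|, for every ζ > 0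
there is a monic polynomial h of degree d = O(max{(1/(1−α))·log(Γ/((1−α)ζ)), 0}) with
|z^{n+d}/p(z) − h(z)| ≤ ζ on the unit circle. -/
theorem stmt12 : ∃ C : ℝ, 0 < C ∧
    ∀ (n : ℕ) (α : ℝ), 0 < n → 0 < α → α < 1 →
    ∀ lam : Fin n → ℂ, Function.Injective lam →
    (∀ j, ‖lam j‖ ≤ α) →
    ∀ ζ : ℝ, 0 < ζ →
    ∃ (d : ℕ) (h : Polynomial ℂ), h.Monic ∧ h.natDegree = d ∧
      (d : ℝ) ≤ C * (max ((1 / (1 - α)) * Real.log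
          ((∑ j, ‖lam j ^ n / ∏ i ∈ Finset.univ.erase j, (lam i - lam j)‖) /
            ((1 - α) * ζ))) 0 + 1) ∧
      ∀ z : ℂ, ‖z‖ = 1 →
        ‖z ^ (n + d) / ∏ j, (z - lam j) - h.eval z‖ ≤ ζ := by
  refine ⟨1, one_pos, fun n α _ hα hα1 lam hinj hlam ζ hζ => ?_⟩
  set Γ := ∑ j, ‖lam j ^ n / ∏ i ∈ univ.erase j, (lam i - lam j)‖
  set d := ⌈max (1 / (1 - α) * Real.log (Γ / ((1 - α) * ζ))) 0⌉₊
  have hdeg : (Lagrange.nodal univ lam).degree ≤ ((X : ℂ[X]) ^ (n + d)).degree := by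
    rw [Lagrange.degree_nodal, degree_X_pow, card_univ, Fintype.card_fin]
    exact_mod_cast Nat.le_add_right n d
  refine ⟨d, X ^ (n + d) /ₘ Lagrange.nodal univ lam,
    (monic_X_pow _).divByMonic_of_degree_le Lagrange.nodal_monic hdeg, ?_,
    by rw [one_mul]; exact (Nat.ceil_lt_add_one (le_max_right _ _)).le, fun z hz => ?_⟩
  · rw [natDegree_divByMonic _ Lagrange.nodal_monic, natDegree_X_pow, Lagrange.natDegree_nodal,
      card_univ, Fintype.card_fin, Nat.add_sub_cancel_left]
  have hz_ne : ∀ j ∈ univ, z ≠ lam j := fun j _ hzj => by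
    have hsep := sub_le_norm_sub_of_norm_eq_one hz (hlam j)
    rw [hzj, sub_self, norm_zero] at hsep
    linarith
  have herr := Lagrange.eval_div_eval_nodal_sub_eval_divByMonic hinj.injOn (X ^ (n + d)) hz_ne
  simp only [Lagrange.eval_nodal, eval_pow, eval_X] at herr
  rw [herr]
  calc _ ≤ ∑ j, α ^ d / (1 - α) * ‖lam j ^ n / ∏ i ∈ univ.erase j, (lam i - lam j)‖ :=
        (norm_sum_le _ _).trans (sum_le_sum fun j _ =>
          norm_nodalWeight_mul_inv_sub_mul_pow_le _ _ hα1 hz (hlam j) n d)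
    _ = α ^ d * Γ / (1 - α) := by rw [← mul_sum]; ring
    _ ≤ ζ := by
        rw [div_le_iff₀ (sub_pos.2 hα1), mul_comm ζ]
        exact pow_mul_le_of_log_div_le hα.le hα1 (mul_pos (sub_pos.2 hα1) hζ)
          ((le_max_left _ _).trans (Nat.le_ceil _))
end

section
/- (Corollary of Bernstein's polynomial inequality) Let p(z) be a complex polynomial of degree at most n, and let m = 20n. Then sup_{|z|≤1} |p'(z)| ≤ 2n · max_{k∈[m]} |p(e^{2πik/m})|. -/
/-!
Bernstein's inequality on the circle comes from the kernel representation
`2π z p'(z) = ∫₀^{2π} p(e^{it}) e^{in(θ-t)} |∑_{a<n} e^{ia(θ-t)}|² dt` (`z = e^{iθ}`, `deg p ≤ n`):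
expanding everything into exponentials, the coefficient of `z^j` collects exactly `j` pairs of
indices. Since the kernel is nonnegative with integral `2πn`, `|p'| ≤ n · sup |p|` on the circle,
and on the disk by the maximum modulus principle. Hence `|p(e^{iθ})|` is `n · sup |p|`-Lipschitz in
`θ`; every point of the circle is within angle `π/m` of the grid, so with `m ≥ 2πn` the sup is at
most the grid maximum plus half the sup.
-/

open Complex Finset Polynomial
open scoped Real

theorem integral_exp_int_mul_I (k : ℤ) :
    ∫ t in (0 : ℝ)..2 * π, exp (k * t * I) = if k = 0 then (2 * π : ℂ) else 0 := by
  split_ifs with hk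
  · simp [hk]
  · have hkI : (k : ℂ) * I ≠ 0 := mul_ne_zero (Int.cast_ne_zero.mpr hk) I_ne_zero
    have hperiod : exp (k * I * (2 * π : ℝ)) = 1 := by
      rw [← exp_int_mul_two_pi_mul_I k]; push_cast; ring_nf
    simp only [mul_right_comm _ _ I, integral_exp_mul_complex hkI, hperiod]
    simp

theorem integral_sum_mul_exp_int_mul_I {ι : Type*} (s : Finset ι) (c : ι → ℂ) (k : ι → ℤ) :
    ∫ t in (0 : ℝ)..2 * π, ∑ i ∈ s, c i * exp (k i * t * I) =
      2 * π * ∑ i ∈ s with k i = 0, c i := by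
  rw [intervalIntegral.integral_finsetSum fun i _ =>
    (by fun_prop : Continuous _).intervalIntegrable _ _, sum_filter, mul_sum]
  refine sum_congr rfl fun i _ => ?_
  rw [intervalIntegral.integral_const_mul, integral_exp_int_mul_I]
  split_ifs <;> ring

/-- Unnormalised: the Fejér kernel of order `n` is `fejerKernel n / n`. -/
noncomputable def fejerKernel (n : ℕ) (s : ℝ) : ℝ := ‖∑ a ∈ range n, exp (a * s * I)‖ ^ 2

theorem fejerKernel_nonneg (n : ℕ) (s : ℝ) : 0 ≤ fejerKernel n s := sq_nonneg _

theorem continuous_fejerKernel (n : ℕ) : Continuous (fejerKernel n) := by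
  unfold fejerKernel; fun_prop

theorem ofReal_fejerKernel (n : ℕ) (s : ℝ) :
    (fejerKernel n s : ℂ) = ∑ a ∈ range n, ∑ b ∈ range n, exp ((a - b : ℂ) * s * I) := by
  rw [fejerKernel, ofReal_pow, ← mul_conj', map_sum, sum_mul_sum]
  refine sum_congr rfl fun a _ => sum_congr rfl fun b _ => ?_
  rw [← exp_conj, ← exp_add]
  congr 1
  simp only [map_mul, conj_natCast, conj_ofReal, conj_I]
  ring

theorem integral_fejerKernel_sub (n : ℕ) (θ : ℝ) :
    ∫ t in (0 : ℝ)..2 * π, fejerKernel n (θ - t) = 2 * π * n := by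
  have hexpand : ∀ t : ℝ, (fejerKernel n (θ - t) : ℂ) = ∑ x ∈ range n ×ˢ range n,
      exp ((x.1 - x.2 : ℂ) * θ * I) * exp (((x.2 : ℤ) - x.1 : ℤ) * t * I) := by
    intro t
    rw [ofReal_fejerKernel, sum_product]
    refine sum_congr rfl fun a _ => sum_congr rfl fun b _ => ?_
    rw [← exp_add]; push_cast; ring_nf
  have hdiag : {x ∈ range n ×ˢ range n | (x.2 : ℤ) - x.1 = 0} = (range n).diag := by
    ext ⟨a, b⟩; simp; omega
  have hcomplex : ∫ t in (0 : ℝ)..2 * π, (fejerKernel n (θ - t) : ℂ) = 2 * π * n := by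
    simp_rw [hexpand]
    rw [integral_sum_mul_exp_int_mul_I, hdiag, sum_congr rfl (g := fun _ => 1) ?_]
    · simp
    · rintro ⟨a, b⟩ h
      obtain ⟨-, rfl : a = b⟩ := mem_diag.mp h
      simp
  exact_mod_cast intervalIntegral.integral_ofReal.symm.trans hcomplex

theorem Polynomial.mul_derivative_eval_eq_sum_range {R : Type*} [CommSemiring R] {n : ℕ}
    {p : R[X]} (hp : p.natDegree < n) (z : R) :
    z * p.derivative.eval z = ∑ j ∈ range n, j * p.coeff j * z ^ j := by
  conv_lhs => rw [p.as_sum_range' n hp]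
  simp only [derivative_sum, derivative_monomial, eval_finsetSum, eval_monomial, mul_sum]
  refine sum_congr rfl fun j _ => ?_
  rcases j with _ | j
  · simp
  · simp only [add_tsub_cancel_right, pow_succ]
    ring

theorem card_filter_range_product_add_eq {j n : ℕ} (hj : j ≤ n) :
    #{x ∈ range n ×ˢ range n | x.2 + j = x.1 + n} = j := by
  have : {x ∈ range n ×ˢ range n | x.2 + j = x.1 + n} =
      (range j).image fun i => (i, i + (n - j)) := by
    ext ⟨a, b⟩
    simp only [mem_filter, mem_product, mem_range, mem_image, Prod.mk.injEq]
    constructor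
    · rintro ⟨⟨-, hb⟩, h⟩; exact ⟨a, by omega, rfl, by omega⟩
    · rintro ⟨i, hi, rfl, rfl⟩; omega
  rw [this, card_image_of_injective _ fun _ _ h => (Prod.ext_iff.mp h).1, card_range]

theorem integral_eval_exp_mul_fejerKernel {n : ℕ} {p : ℂ[X]} (hp : p.natDegree ≤ n) (θ : ℝ) :
    ∫ t in (0 : ℝ)..2 * π,
        p.eval (exp (t * I)) * exp (n * (θ - t : ℝ) * I) * fejerKernel n (θ - t) =
      2 * π * (exp (θ * I) * p.derivative.eval (exp (θ * I))) := by
  have hp' : p.natDegree < n + 1 := Nat.lt_succ_of_le hp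
  have hexpand : ∀ t : ℝ,
      p.eval (exp (t * I)) * exp (n * (θ - t : ℝ) * I) * fejerKernel n (θ - t) =
        ∑ x ∈ range (n + 1) ×ˢ (range n ×ˢ range n),
          p.coeff x.1 * exp ((n + x.2.1 - x.2.2 : ℂ) * θ * I) *
            exp (((x.1 : ℤ) - (n + x.2.1 - x.2.2) : ℤ) * t * I) := by
    intro t
    rw [eval_eq_sum_range' hp', ofReal_fejerKernel, sum_mul, sum_mul_sum]
    simp only [mul_sum, sum_product]
    refine sum_congr rfl fun j _ => sum_congr rfl fun a _ => sum_congr rfl fun b _ => ?_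
    simp only [← exp_nat_mul, mul_assoc, ← exp_add]
    congr 2
    push_cast
    ring
  simp_rw [hexpand]
  rw [integral_sum_mul_exp_int_mul_I, mul_derivative_eval_eq_sum_range hp']
  congr 1
  rw [sum_filter, sum_product]
  refine sum_congr rfl fun j hj => ?_
  have hterm : ∀ y ∈ range n ×ˢ range n,
      (if ((j : ℤ) - (n + y.1 - y.2) : ℤ) = 0 then
        p.coeff j * exp ((n + y.1 - y.2 : ℂ) * θ * I) else 0) =
      if y.2 + j = y.1 + n then p.coeff j * exp (θ * I) ^ j else 0 := by
    intro y _
    by_cases h : y.2 + j = y.1 + n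
    · have hC : (n + y.1 - y.2 : ℂ) = j := by
        have h' : (y.2 + j : ℂ) = y.1 + n := by exact_mod_cast h
        linear_combination -h'
      rw [if_pos (by omega), if_pos h, hC, ← exp_nat_mul, mul_assoc]
    · rw [if_neg (by omega), if_neg h]
  rw [sum_congr rfl hterm, ← sum_filter, sum_const,
    card_filter_range_product_add_eq (Nat.lt_succ_iff.mp (mem_range.mp hj)), nsmul_eq_mul]
  ring

theorem Polynomial.norm_derivative_eval_exp_le {n : ℕ} {p : ℂ[X]} (hp : p.natDegree ≤ n) {S : ℝ}
    (hS : ∀ z : ℂ, ‖z‖ = 1 → ‖p.eval z‖ ≤ S) (θ : ℝ) :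
    ‖p.derivative.eval (exp (θ * I))‖ ≤ n * S := by
  have hbound : ‖∫ t in (0 : ℝ)..2 * π,
      p.eval (exp (t * I)) * exp (n * (θ - t : ℝ) * I) * fejerKernel n (θ - t)‖ ≤
        ∫ t in (0 : ℝ)..2 * π, S * fejerKernel n (θ - t) := by
    have hcont : Continuous fun t => S * fejerKernel n (θ - t) := by
      have := continuous_fejerKernel n; fun_prop
    refine intervalIntegral.norm_integral_le_of_norm_le Real.two_pi_pos.le
      (MeasureTheory.ae_of_all _ fun t _ => ?_) (hcont.intervalIntegrable _ _)
    rw [norm_mul, norm_mul, ← ofReal_natCast, ← ofReal_mul, norm_exp_ofReal_mul_I, mul_one,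
      norm_real, Real.norm_of_nonneg (fejerKernel_nonneg _ _)]
    exact mul_le_mul_of_nonneg_right (hS _ (norm_exp_ofReal_mul_I t)) (fejerKernel_nonneg _ _)
  rw [integral_eval_exp_mul_fejerKernel hp, intervalIntegral.integral_const_mul,
    integral_fejerKernel_sub] at hbound
  simp only [norm_mul, Complex.norm_ofNat, norm_real, Real.norm_of_nonneg Real.pi_pos.le,
    norm_exp_ofReal_mul_I, one_mul] at hbound
  nlinarith [Real.two_pi_pos]

theorem Polynomial.norm_derivative_eval_le {n : ℕ} {p : ℂ[X]} (hp : p.natDegree ≤ n) {S : ℝ}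
    (hS : ∀ z : ℂ, ‖z‖ = 1 → ‖p.eval z‖ ≤ S) {z : ℂ} (hz : ‖z‖ ≤ 1) :
    ‖p.derivative.eval z‖ ≤ n * S := by
  refine Complex.norm_le_of_forall_mem_frontier_norm_le (U := Metric.ball 0 1)
    Metric.isBounded_ball p.derivative.differentiable.diffContOnCl (fun w hw => ?_) ?_
  · rw [frontier_ball (0 : ℂ) one_ne_zero, mem_sphere_zero_iff_norm] at hw
    rw [← norm_mul_exp_arg_mul_I w, hw, ofReal_one, one_mul]
    exact p.norm_derivative_eval_exp_le hp hS _
  · rwa [closure_ball (0 : ℂ) one_ne_zero, Metric.mem_closedBall, dist_zero_right]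

theorem Polynomial.norm_eval_exp_sub_eval_exp_le {n : ℕ} {p : ℂ[X]} (hp : p.natDegree ≤ n)
    {S : ℝ} (hS : ∀ z : ℂ, ‖z‖ = 1 → ‖p.eval z‖ ≤ S) (θ θ' : ℝ) :
    ‖p.eval (exp (θ * I)) - p.eval (exp (θ' * I))‖ ≤ n * S * |θ - θ'| := by
  have hderiv : ∀ t : ℝ, HasDerivAt (fun t : ℝ => p.eval (exp (t * I)))
      (p.derivative.eval (exp (t * I)) * (exp (t * I) * I)) t := fun t => by
    simpa [Function.comp_def] using
      (p.hasDerivAt _).comp t ((hasDerivAt_id t).ofReal_comp.mul_const I).cexp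
  have hbound : ∀ t : ℝ, ‖p.derivative.eval (exp (t * I)) * (exp (t * I) * I)‖ ≤ n * S := by
    intro t
    rw [norm_mul, norm_mul, norm_exp_ofReal_mul_I, norm_I, mul_one, mul_one]
    exact p.norm_derivative_eval_exp_le hp hS t
  simpa [Real.norm_eq_abs] using Convex.norm_image_sub_le_of_norm_hasDerivWithin_le
    (fun t _ => (hderiv t).hasDerivWithinAt) (fun t _ => hbound t) convex_univ
    (Set.mem_univ θ') (Set.mem_univ θ)

theorem exists_mem_Icc_exp_eq_and_abs_sub_le {m : ℕ} (hm : 0 < m) (θ : ℝ) :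
    ∃ k ∈ Finset.Icc 1 m, ∃ θ' : ℝ, |θ - θ'| ≤ π / m ∧
      exp (θ' * I) = exp (2 * π * I * k / m) := by
  set k' := round (θ * m / (2 * π))
  -- `k` is the representative of the nearest grid index `k'` modulo `m` in `[1, m]`
  have hmz : (0 : ℤ) < m := by exact_mod_cast hm
  obtain ⟨k, hk⟩ : ∃ k : ℕ, (k : ℤ) = (k' - 1) % m + 1 :=
    ⟨_, Int.toNat_of_nonneg (by have := Int.emod_nonneg (k' - 1) hmz.ne'; omega)⟩
  have hkIcc : k ∈ Finset.Icc 1 m := by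
    have := Int.emod_nonneg (k' - 1) hmz.ne'
    have := Int.emod_lt_of_pos (k' - 1) hmz
    rw [Finset.mem_Icc]; omega
  refine ⟨k, hkIcc, 2 * π * k' / m, ?_, ?_⟩
  · have hm' : (0 : ℝ) < m := by exact_mod_cast hm
    have hround : |θ * m / (2 * π) - k'| ≤ 1 / 2 := abs_sub_round _
    calc |θ - 2 * π * k' / m| = |(θ * m / (2 * π) - k') * (2 * π / m)| := by
          congr 1; field_simp
      _ = |θ * m / (2 * π) - k'| * (2 * π / m) := by
          rw [abs_mul, abs_of_pos (by positivity : 0 < 2 * π / m)]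
      _ ≤ 1 / 2 * (2 * π / m) := by gcongr
      _ = π / m := by ring
  · have hkC : (k : ℂ) = k' - m * ((k' - 1) / m : ℤ) := by
      rw [Int.emod_def] at hk
      exact_mod_cast (by omega : (k : ℤ) = k' - m * ((k' - 1) / m))
    refine exp_eq_exp_iff_exists_int.mpr ⟨(k' - 1) / m, ?_⟩
    have hmC : (m : ℂ) ≠ 0 := by exact_mod_cast hm.ne'
    rw [hkC]
    push_cast
    field_simp
    ring

theorem Polynomial.norm_eval_le_two_mul_of_forall_mem_Icc_le {n m : ℕ} {p : ℂ[X]}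
    (hp : p.natDegree ≤ n) (hm : 0 < m) (hnm : 2 * π * n ≤ m) {M : ℝ}
    (hM : ∀ k ∈ Finset.Icc 1 m, ‖p.eval (exp (2 * π * I * k / m))‖ ≤ M) {z : ℂ} (hz : ‖z‖ = 1) :
    ‖p.eval z‖ ≤ 2 * M := by
  obtain ⟨w, hw, hmax⟩ := (isCompact_sphere (0 : ℂ) 1).exists_isMaxOn
    (NormedSpace.sphere_nonempty.mpr zero_le_one) p.continuous.norm.continuousOn
  set S := ‖p.eval w‖
  have hS : ∀ z : ℂ, ‖z‖ = 1 → ‖p.eval z‖ ≤ S := fun z hz => hmax (by simpa using hz)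
  have hw' : exp (arg w * I) = w := by
    simpa [mem_sphere_zero_iff_norm.mp hw] using norm_mul_exp_arg_mul_I w
  obtain ⟨k, hk, θ', hθ', hexp⟩ := exists_mem_Icc_exp_eq_and_abs_sub_le hm (arg w)
  have hratio : n * S * (π / m) ≤ S / 2 := by
    have : n * π / m ≤ 1 / 2 := by
      rw [div_le_iff₀ (by exact_mod_cast hm)]; linarith
    calc n * S * (π / m) = S * (n * π / m) := by ring
      _ ≤ S * (1 / 2) := by gcongr
      _ = S / 2 := by ring
  have hSM : S ≤ S / 2 + M := calc
    S = ‖(p.eval (exp (arg w * I)) - p.eval (exp (θ' * I))) + p.eval (exp (θ' * I))‖ := by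
        rw [sub_add_cancel, hw']
    _ ≤ n * S * |arg w - θ'| + M :=
        norm_add_le_of_le (p.norm_eval_exp_sub_eval_exp_le hp hS _ _) (hexp ▸ hM k hk)
    _ ≤ n * S * (π / m) + M := by gcongr
    _ ≤ S / 2 + M := by linarith
  linarith [hS z hz]

/-- Corollary of Bernstein's polynomial inequality: for a polynomial p of degree ≤ n and
the grid of m = 20n equispaced points on the unit circle,
sup_{|z|≤1} |p'(z)| ≤ 2n · max_{k∈[m]} |p(e^{2πik/m})|. -/
theorem stmt17 (n : ℕ) (hn : 0 < n) (p : Polynomial ℂ) (hdeg : p.natDegree ≤ n)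
    (M : ℝ)
    (hM : ∀ k ∈ Finset.Icc 1 (20 * n),
      ‖p.eval (Complex.exp (2 * Real.pi * Complex.I * k / (20 * n)))‖ ≤ M) :
    ∀ z : ℂ, ‖z‖ ≤ 1 →
      ‖p.derivative.eval z‖ ≤ 2 * n * M := by
  intro z hz
  have hgrid : ∀ k ∈ Finset.Icc 1 (20 * n),
      ‖p.eval (exp (2 * π * I * k / ((20 * n : ℕ) : ℂ)))‖ ≤ M := by
    push_cast; exact hM
  have hnm : 2 * π * n ≤ ((20 * n : ℕ) : ℝ) := by
    push_cast; nlinarith [Real.pi_le_four, (Nat.cast_nonneg n : (0 : ℝ) ≤ n)]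
  have hcircle : ∀ w : ℂ, ‖w‖ = 1 → ‖p.eval w‖ ≤ 2 * M := fun w hw =>
    p.norm_eval_le_two_mul_of_forall_mem_Icc_le hdeg (by omega) hnm hgrid hw
  calc ‖p.derivative.eval z‖ ≤ n * (2 * M) := p.norm_derivative_eval_le hdeg hcircle hz
    _ = 2 * n * M := by ring
end
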